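/- Combining the two-sided bounds: under the assumptions that (i) with probability ≥ 1 − δ/2, the terms involving u_m and û_m satisfy Δ(u_m, û_m, y*) + Δ(û_m, u_m, ŷ) ≤ A(n, δ), and (ii) the Lipschitz smoothness assumption on u holds, the regret Regret_n = u_h(y*) − u_h(ŷ) satisfies, with probability at least 1 − δ, Regret_n ≤ A(n, δ) + 2·WD(P_human, P_model). -/

import Mathlib

/-!
The regret splits as a telescoping sum through `u_m` and `û_m`:
`u_h(y*) - u_h(ŷ) = Δ(u_h, u_m, y*) + [Δ(u_m, û_m, y*) + Δ(û_m, u_m, ŷ)] + (û_m(y*) - û_m(ŷ)) + Δ(u_m, u_h, ŷ)`.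
The bracket is at most `A` on an event of probability `≥ 1 - δ/2 ≥ 1 - δ`, the term `û_m(y*) - û_m(ŷ)`
is nonpositive since `ŷ` maximises `û_m`, and each outer term is at most `WD(P_human, P_model)`:
integrating a `C`-Lipschitz function against any coupling bounds the difference of its expectations
by the transport cost of that coupling.
-/

open Finset MeasureTheory

/-- The Wasserstein distance on a finite set with cost `C`, as the infimum of
coupling costs. -/
noncomputable def WD {Y : Type*} [Fintype Y] (C : Y → Y → ℝ) (ν μ : Y → ℝ) : ℝ :=
  sInf { c : ℝ | ∃ γ : Y → Y → ℝ,
    (∀ i j, 0 ≤ γ i j) ∧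
    (∀ i, ∑ j, γ i j = ν i) ∧
    (∀ j, ∑ i, γ i j = μ j) ∧
    c = ∑ i, ∑ j, γ i j * C i j }

section Wasserstein

variable {Y : Type*} [Fintype Y] {C : Y → Y → ℝ} {f : Y → ℝ} {ν μ : Y → ℝ}

theorem abs_sum_mul_sub_sum_mul_le_of_coupling (hf : ∀ a b, |f a - f b| ≤ C a b)
    {γ : Y → Y → ℝ} (hγ : ∀ i j, 0 ≤ γ i j) (hν : ∀ i, ∑ j, γ i j = ν i)
    (hμ : ∀ j, ∑ i, γ i j = μ j) :
    |∑ y, f y * ν y - ∑ y, f y * μ y| ≤ ∑ i, ∑ j, γ i j * C i j := by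
  have hsplit : ∑ y, f y * ν y - ∑ y, f y * μ y = ∑ i, ∑ j, γ i j * (f i - f j) := by
    simp only [mul_sub, sum_sub_distrib, ← hν, ← hμ, mul_sum]
    rw [sum_comm (f := fun j i => f j * γ i j)]
    simp only [mul_comm]
  calc |∑ y, f y * ν y - ∑ y, f y * μ y|
      ≤ ∑ i, ∑ j, |γ i j * (f i - f j)| := by
        rw [hsplit]
        exact (abs_sum_le_sum_abs _ _).trans (sum_le_sum fun i _ => abs_sum_le_sum_abs _ _)
    _ ≤ ∑ i, ∑ j, γ i j * C i j := by
        gcongr with i _ j _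
        rw [abs_mul, abs_of_nonneg (hγ i j)]
        exact mul_le_mul_of_nonneg_left (hf i j) (hγ i j)

/-- The independent coupling `ν ⊗ μ` witnesses that the infimum defining `WD` is over a
nonempty set. -/
theorem abs_sum_mul_sub_sum_mul_le_WD (hf : ∀ a b, |f a - f b| ≤ C a b)
    (hν : ∀ y, 0 ≤ ν y) (hν1 : ∑ y, ν y = 1) (hμ : ∀ y, 0 ≤ μ y) (hμ1 : ∑ y, μ y = 1) :
    |∑ y, f y * ν y - ∑ y, f y * μ y| ≤ WD C ν μ := by
  refine le_csInf ⟨_, fun i j => ν i * μ j, fun i j => mul_nonneg (hν i) (hμ j),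
    fun i => by rw [← mul_sum, hμ1, mul_one], fun j => by rw [← sum_mul, hν1, one_mul], rfl⟩ ?_
  rintro c ⟨γ, hγ, hγν, hγμ, rfl⟩
  exact abs_sum_mul_sub_sum_mul_le_of_coupling hf hγ hγν hγμ

end Wasserstein

theorem regret_le_of_outer_le {Y : Type*} (uh um umhat : Y → ℝ) {ystar yhat : Y} {A W : ℝ}
    (houter : ∀ y, |uh y - um y| ≤ W) (hhat : umhat ystar ≤ umhat yhat)
    (hmiddle : (um ystar - umhat ystar) + (umhat yhat - um yhat) ≤ A) :
    uh ystar - uh yhat ≤ A + 2 * W := by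
  have hstar := (abs_le.mp (houter ystar)).2
  have hyhat := (abs_le.mp (houter yhat)).1
  linarith

theorem stmt_10_general {Y : Type*} [Fintype Y]
    {Ω : Type*} [MeasurableSpace Ω] (μ : Measure Ω) [IsProbabilityMeasure μ]
    (u : Y → Y → ℝ)
    (C : Y → Y → ℝ)
    (hLip : ∀ y y' y'', |u y y' - u y y''| ≤ C y' y'')
    (Phuman Pmodel : Y → ℝ)
    (hPh : ∀ y, 0 ≤ Phuman y) (hPh1 : ∑ y, Phuman y = 1)
    (hPm : ∀ y, 0 ≤ Pmodel y) (hPm1 : ∑ y, Pmodel y = 1)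
    (uh um : Y → ℝ)
    (huh : ∀ y, uh y = ∑ y', u y y' * Phuman y')
    (hum : ∀ y, um y = ∑ y', u y y' * Pmodel y')
    (umhat : Y → Ω → ℝ)
    (ystar : Y)
    (yhat : Ω → Y)
    (hkey : ∀ ω, umhat ystar ω ≤ umhat (yhat ω) ω)
    (δ : ℝ) (hδ : δ ∈ Set.Ioo (0:ℝ) 1)
    (A : ℝ)
    (hA : ENNReal.ofReal (1 - δ / 2) ≤
      μ {ω | (um ystar - umhat ystar ω) + (umhat (yhat ω) ω - um (yhat ω)) ≤ A}) :
    ENNReal.ofReal (1 - δ) ≤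
      μ {ω | uh ystar - uh (yhat ω) ≤ A + 2 * WD C Phuman Pmodel} := by
  have houter : ∀ y, |uh y - um y| ≤ WD C Phuman Pmodel := fun y => by
    rw [huh, hum]
    exact abs_sum_mul_sub_sum_mul_le_WD (hLip y) hPh hPh1 hPm hPm1
  calc ENNReal.ofReal (1 - δ) ≤ ENNReal.ofReal (1 - δ / 2) :=
        ENNReal.ofReal_le_ofReal (by linarith [hδ.1])
    _ ≤ μ _ := hA
    _ ≤ _ := measure_mono fun ω hω =>
        regret_le_of_outer_le uh um (umhat · ω) houter (hkey ω) hω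

/-- Regret bound for MBR decoding: combining a high-probability bound
`A(n,δ)` on the middle (Monte Carlo) terms with the deterministic Wasserstein bound
on the outer terms yields `Regret_n ≤ A(n,δ) + 2·WD(P_human, P_model)` with
probability at least `1 − δ`. -/
theorem stmt_10 {Y : Type*} [Fintype Y]
    {Ω : Type*} [MeasurableSpace Ω] (μ : Measure Ω) [IsProbabilityMeasure μ]
    (n : ℕ) (hn : 0 < n)
    (u : Y → Y → ℝ) (hu : ∀ y y', u y y' ∈ Set.Icc (0:ℝ) 1)
    (C : Y → Y → ℝ) (hC : ∀ y' y'', 0 ≤ C y' y'')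
    (hLip : ∀ y y' y'', |u y y' - u y y''| ≤ C y' y'')
    (Phuman Pmodel : Y → ℝ)
    (hPh : ∀ y, 0 ≤ Phuman y) (hPh1 : ∑ y, Phuman y = 1)
    (hPm : ∀ y, 0 ≤ Pmodel y) (hPm1 : ∑ y, Pmodel y = 1)
    (uh um : Y → ℝ)
    (huh : ∀ y, uh y = ∑ y', u y y' * Phuman y')
    (hum : ∀ y, um y = ∑ y', u y y' * Pmodel y')
    (Xs : Fin n → Ω → Y)
    (umhat : Y → Ω → ℝ)
    (humhat : ∀ y ω, umhat y ω = (1 / (n : ℝ)) * ∑ i, u y (Xs i ω))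
    (ystar : Y) (hystar : ∀ y, uh y ≤ uh ystar)
    (yhat : Ω → Y)
    (hyhat : ∀ ω i, umhat (Xs i ω) ω ≤ umhat (yhat ω) ω)
    (hkey : ∀ ω, umhat ystar ω ≤ umhat (yhat ω) ω)
    (δ : ℝ) (hδ : δ ∈ Set.Ioo (0:ℝ) 1)
    (A : ℝ)
    (hA : ENNReal.ofReal (1 - δ / 2) ≤
      μ {ω | (um ystar - umhat ystar ω) + (umhat (yhat ω) ω - um (yhat ω)) ≤ A}) :
    ENNReal.ofReal (1 - δ) ≤
      μ {ω | uh ystar - uh (yhat ω) ≤ A + 2 * WD C Phuman Pmodel} :=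
  stmt_10_general μ u C hLip Phuman Pmodel hPh hPh1 hPm hPm1 uh um huh hum umhat ystar yhat hkey δ
    hδ A hA
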